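/- arXiv:1305.1070 — 3 statements merged into one kernel-verified Lean document; each statement's English description precedes it below -/
import Mathlib

section
/- Let A = L D L^T be an invertible complex matrix with L lower unitriangular and D block diagonal, and let G = A^{-1}. Then G satisfies the Takahashi identity G = (I − L^T) G + D^{-1} L^{-1}. -/
open Matrix

theorem Matrix.transpose_mul_inv_mul_mul_transpose {m R : Type*} [Fintype m] [DecidableEq m]
    [CommRing R] (L D : Matrix m m R) (hL : IsUnit L) :
    Lᵀ * (L * D * Lᵀ)⁻¹ = D⁻¹ * L⁻¹ := by
  have hLT : IsUnit Lᵀ.det := by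
    rwa [det_transpose, ← isUnit_iff_isUnit_det]
  rw [mul_inv_rev, mul_inv_rev, ← mul_assoc, mul_nonsing_inv _ hLT, one_mul]

theorem stmt1_general {n : ℕ} (L D A : Matrix (Fin n) (Fin n) ℂ)
    (hLu : IsUnit L)
    (hA : A = L * D * Lᵀ) :
    A⁻¹ = (1 - Lᵀ) * A⁻¹ + D⁻¹ * L⁻¹ := by
  rw [sub_mul, one_mul, hA, transpose_mul_inv_mul_mul_transpose L D hLu, sub_add_cancel]

/-- Takahashi identity G = (I − Lᵀ) G + D⁻¹ L⁻¹ for A = L D Lᵀ. -/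
theorem stmt1 {n : ℕ} (L D A : Matrix (Fin n) (Fin n) ℂ)
    (hLlower : ∀ i j : Fin n, i < j → L i j = 0)
    (hLdiag : ∀ i : Fin n, L i i = 1)
    (hLu : IsUnit L) (hDu : IsUnit D)
    (hA : A = L * D * Lᵀ) (hAu : IsUnit A) :
    A⁻¹ = (1 - Lᵀ) * A⁻¹ + D⁻¹ * L⁻¹ :=
  stmt1_general L D A hLu hA
end

section
/- Let A = [[A_11, A_12],[A_21, A_22]] be invertible with A_11 invertible, G = A^{-1}, Σ = diag(Σ_11, Σ_22), and G^< = G Σ G^†. Then the (1,2) block satisfies G^<_{12} = −A_11^{-1} A_12 G^<_{22} + A_11^{-1} Σ_11 (G_{21})^†. -/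
/-!
Multiplying `G^< = G Σ Gᴴ` on the left by `A` and using `A G = 1` gives `A G^< = Σ Gᴴ`.
The first block row of this identity reads `A₁₁ G^<₁₂ + A₁₂ G^<₂₂ = Σ₁₁ (G₂₁)ᴴ`,
which is solved for `G^<₁₂` with `A₁₁⁻¹`.
-/

open Matrix

namespace Matrix

variable {α k l m n p q : Type*}

theorem toBlocks₁₂_conjTranspose [Star α] (M : Matrix (m ⊕ n) (k ⊕ l) α) :
    Mᴴ.toBlocks₁₂ = M.toBlocks₂₁ᴴ :=
  rfl

theorem toBlocks₁₂_fromBlocks_mul [Fintype m] [Fintype n] [NonUnitalNonAssocSemiring α]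
    (A₁₁ : Matrix k m α) (A₁₂ : Matrix k n α) (A₂₁ : Matrix l m α) (A₂₂ : Matrix l n α)
    (X : Matrix (m ⊕ n) (p ⊕ q) α) :
    (fromBlocks A₁₁ A₁₂ A₂₁ A₂₂ * X).toBlocks₁₂ = A₁₁ * X.toBlocks₁₂ + A₁₂ * X.toBlocks₂₂ := by
  conv_lhs => rw [← fromBlocks_toBlocks X, fromBlocks_multiply]
  exact toBlocks_fromBlocks₁₂ ..

theorem eq_neg_inv_mul_add_inv_mul_of_mul_add_eq [Fintype m] [DecidableEq m] [CommRing α]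
    {A : Matrix m m α} (hA : IsUnit A) {B C X : Matrix m n α}
    (h : A * X + B = C) : X = -(A⁻¹ * B) + A⁻¹ * C := by
  rw [← h, Matrix.mul_add, nonsing_inv_mul_cancel_left _ _ ((isUnit_iff_isUnit_det A).mp hA)]
  abel

end Matrix

/-- G^<₁₂ = −A11⁻¹ A12 G^<₂₂ + A11⁻¹ Σ₁₁ G₂₁†. -/
theorem stmt16 {m n : Type*} [Fintype m] [Fintype n] [DecidableEq m] [DecidableEq n]
    (A11 : Matrix m m ℂ) (A12 : Matrix m n ℂ) (A21 : Matrix n m ℂ) (A22 : Matrix n n ℂ)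
    (A : Matrix (m ⊕ n) (m ⊕ n) ℂ)
    (hA : A = Matrix.fromBlocks A11 A12 A21 A22)
    (hAu : IsUnit A) (h11 : IsUnit A11)
    (Sig11 : Matrix m m ℂ) (Sig22 : Matrix n n ℂ)
    (Sig : Matrix (m ⊕ n) (m ⊕ n) ℂ)
    (hSig : Sig = Matrix.fromBlocks Sig11 0 0 Sig22)
    (G Gless : Matrix (m ⊕ n) (m ⊕ n) ℂ)
    (hG : G = A⁻¹) (hGless : Gless = G * Sig * Gᴴ) :
    Gless.toBlocks₁₂
      = -(A11⁻¹ * A12 * Gless.toBlocks₂₂) + A11⁻¹ * Sig11 * (G.toBlocks₂₁)ᴴ := by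
  have hAGless : A * Gless = Sig * Gᴴ := by
    rw [hGless, hG, Matrix.mul_assoc, mul_nonsing_inv_cancel_left _ _
      ((isUnit_iff_isUnit_det A).mp hAu)]
  have hRow : A11 * Gless.toBlocks₁₂ + A12 * Gless.toBlocks₂₂ = Sig11 * (G.toBlocks₂₁)ᴴ := by
    have := congrArg toBlocks₁₂ hAGless
    rwa [hA, hSig, toBlocks₁₂_fromBlocks_mul, toBlocks₁₂_fromBlocks_mul, toBlocks₁₂_conjTranspose,
      Matrix.zero_mul, add_zero] at this
  simpa only [Matrix.mul_assoc] using eq_neg_inv_mul_add_inv_mul_of_mul_add_eq h11 hRow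
end

section
/- Let A be a block tridiagonal, complex symmetric, invertible matrix with N diagonal blocks, with each leading principal block submatrix invertible. Define recursively the RGF forward quantities: g_1 = A_{11}^{-1}, g_i = (A_{ii} − A_{i-1,i}^T g_{i-1} A_{i-1,i})^{-1} for i = 2,…,N. Then g_N equals the (N,N) diagonal block of A^{-1}. -/
/-!
Write the leading `(i+1)`-block submatrix as `[[P, Q], [Qᵀ, Aᵢᵢ]]`, with `P` the leading
`i`-block submatrix. The last diagonal block of its inverse is the inverse of the Schur complement
`Aᵢᵢ - Qᵀ P⁻¹ Q`. Block tridiagonality leaves only the last block `Aᵢ₋₁,ᵢ` of `Q` nonzero, so the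
Schur complement is `Aᵢᵢ - Aᵢ₋₁,ᵢᵀ (P⁻¹)ᵢ₋₁,ᵢ₋₁ Aᵢ₋₁,ᵢ`. By induction `(P⁻¹)ᵢ₋₁,ᵢ₋₁ = gᵢ₋₁`, hence
`gᵢ` is the last diagonal block of the inverse of the leading `(i+1)`-block submatrix; for `i = N`
that submatrix is `A` itself.
-/

open Matrix

namespace Matrix

section Blocks

variable {α ι : Type*}

def blockEntry {I J κ : Type*} (M : Matrix (I × ι) (J × κ) α) (i : I) (j : J) : Matrix ι κ α :=
  of fun a b => M (i, a) (j, b)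

theorem blockEntry_transpose {I : Type*} (M : Matrix (I × ι) (I × ι) α) (i j : I) :
    blockEntry Mᵀ i j = (blockEntry M j i)ᵀ :=
  rfl

def leadingBlocks {N : ℕ} (M : Matrix (Fin N × ι) (Fin N × ι) α) (k : ℕ) (hk : k ≤ N) :
    Matrix (Fin k × ι) (Fin k × ι) α :=
  M.submatrix (fun p => (Fin.castLE hk p.1, p.2)) (fun p => (Fin.castLE hk p.1, p.2))

def lastBlockRow {k : ℕ} (M : Matrix (Fin (k + 1) × ι) (Fin (k + 1) × ι) α) :
    Matrix ι (Fin k × ι) α :=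
  of fun a q => M (Fin.last k, a) (q.1.castSucc, q.2)

def lastBlockCol {k : ℕ} (M : Matrix (Fin (k + 1) × ι) (Fin (k + 1) × ι) α) :
    Matrix (Fin k × ι) ι α :=
  of fun p b => M (p.1.castSucc, p.2) (Fin.last k, b)

variable (ι) in
def finSuccProdEquiv (k : ℕ) : (Fin k × ι) ⊕ ι ≃ Fin (k + 1) × ι where
  toFun := Sum.elim (fun p => (p.1.castSucc, p.2)) (fun b => (Fin.last k, b))
  invFun q := Fin.lastCases (Sum.inr q.2) (fun i => Sum.inl (i, q.2)) q.1
  left_inv := by rintro (p | b) <;> simp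
  right_inv := by
    rintro ⟨i, b⟩
    induction i using Fin.lastCases <;> simp

theorem submatrix_finSuccProdEquiv {k : ℕ} (M : Matrix (Fin (k + 1) × ι) (Fin (k + 1) × ι) α) :
    M.submatrix (finSuccProdEquiv ι k) (finSuccProdEquiv ι k) =
      fromBlocks (leadingBlocks M k k.le_succ) (lastBlockCol M) (lastBlockRow M)
        (blockEntry M (Fin.last k) (Fin.last k)) := by
  ext (p | a) (q | b) <;> rfl

end Blocks

theorem mul_mul_eq_blockEntry_of_supported {α ι J κ κ' : Type*} [NonUnitalNonAssocSemiring α]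
    [Fintype ι] [Fintype J] [DecidableEq J]
    (R : Matrix κ (J × ι) α) (X : Matrix (J × ι) (J × ι) α) (Q : Matrix (J × ι) κ' α) (j : J)
    (hR : ∀ c i a, i ≠ j → R c (i, a) = 0) (hQ : ∀ i a c, i ≠ j → Q (i, a) c = 0) :
    R * X * Q = (of fun c a => R c (j, a)) * blockEntry X j j * (of fun b c => Q (j, b) c) := by
  ext c d
  simp only [mul_apply, of_apply, blockEntry, Fintype.sum_prod_type]
  rw [Finset.sum_eq_single j (fun i _ hi => by simp [hQ _ _ _ hi]) (by simp)]
  refine Finset.sum_congr rfl fun b _ => ?_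
  rw [Finset.sum_eq_single j (fun i _ hi => by simp [hR _ _ _ hi]) (by simp)]

variable {α ι : Type*} [CommRing α] [Fintype ι] [DecidableEq ι]

theorem inv_fromBlocks_toBlocks₂₂ {m : Type*} [Fintype m] [DecidableEq m]
    {A : Matrix m m α} {B : Matrix m ι α} {C : Matrix ι m α} {D : Matrix ι ι α}
    (hA : IsUnit A) (h : IsUnit (fromBlocks A B C D)) :
    (fromBlocks A B C D)⁻¹.toBlocks₂₂ = (D - C * A⁻¹ * B)⁻¹ := by
  let := hA.invertible
  let := h.invertible
  let := invertibleOfFromBlocks₁₁Invertible A B C D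
  rw [← invOf_eq_nonsing_inv, invOf_fromBlocks₁₁_eq, toBlocks_fromBlocks₂₂,
    invOf_eq_nonsing_inv, invOf_eq_nonsing_inv]

theorem blockEntry_inv_last {k : ℕ} (M : Matrix (Fin (k + 1) × ι) (Fin (k + 1) × ι) α)
    (hP : IsUnit (leadingBlocks M k k.le_succ)) (hM : IsUnit M) :
    blockEntry M⁻¹ (Fin.last k) (Fin.last k) =
      (blockEntry M (Fin.last k) (Fin.last k) -
        lastBlockRow M * (leadingBlocks M k k.le_succ)⁻¹ * lastBlockCol M)⁻¹ := by
  have hM' := (isUnit_submatrix_equiv (finSuccProdEquiv ι k) (finSuccProdEquiv ι k)).2 hM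
  rw [submatrix_finSuccProdEquiv] at hM'
  rw [← inv_fromBlocks_toBlocks₂₂ hP hM', ← submatrix_finSuccProdEquiv, inv_submatrix_equiv]
  rfl

theorem blockEntry_inv_zero_zero (M : Matrix (Fin 1 × ι) (Fin 1 × ι) α) (hM : IsUnit M) :
    blockEntry M⁻¹ 0 0 = (blockEntry M 0 0)⁻¹ := by
  rw [← Fin.last_zero, blockEntry_inv_last M (isUnit_of_subsingleton _) hM]
  congr
  ext a b
  simp [mul_apply]

theorem rgf_forward_eq_blockEntry_inv_leadingBlocks {n : ℕ}
    (A : Matrix (Fin (n + 1) × ι) (Fin (n + 1) × ι) α) (hAsym : Aᵀ = A)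
    (htri : ∀ i j : Fin (n + 1), (i : ℕ) + 1 < j → blockEntry A i j = 0)
    (hlead : ∀ k : Fin (n + 1), IsUnit (leadingBlocks A (k + 1) k.isLt))
    (g : Fin (n + 1) → Matrix ι ι α) (hg0 : g 0 = (blockEntry A 0 0)⁻¹)
    (hgrec : ∀ i : Fin n, g i.succ = (blockEntry A i.succ i.succ -
      (blockEntry A i.castSucc i.succ)ᵀ * g i.castSucc * blockEntry A i.castSucc i.succ)⁻¹)
    (i : Fin (n + 1)) :
    g i = blockEntry (leadingBlocks A (i + 1) i.isLt)⁻¹ (Fin.last i) (Fin.last i) := by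
  induction i using Fin.induction with
  | zero =>
    rw [hg0]
    exact (blockEntry_inv_zero_zero _ (hlead 0)).symm
  | succ i ih =>
    rw [blockEntry_inv_last _ (hlead i.castSucc) (hlead i.succ), hgrec]
    -- only the coupling term `Qᵀ P⁻¹ Q` of the Schur complement remains to be matched
    congr 2
    have hlow : ∀ p q : Fin (n + 1), (q : ℕ) + 1 < p → blockEntry A p q = 0 := fun p q h => by
      rw [← hAsym, blockEntry_transpose, htri q p h, transpose_zero]
    rw [ih, mul_mul_eq_blockEntry_of_supported _ _ _ (Fin.last i)]
    · congr 2
      rw [← blockEntry_transpose, hAsym]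
      rfl
    · intro c j a hj
      exact congrFun (congrFun (hlow _ _ (by simp [Fin.val_lt_last hj])) c) a
    · intro j a c hj
      exact congrFun (congrFun (htri _ _ (by simp [Fin.val_lt_last hj])) a) c

end Matrix

theorem stmt19_general {n m : ℕ}
    (A : Matrix (Fin (n + 1) × Fin m) (Fin (n + 1) × Fin m) ℂ)
    (Ab : Fin (n + 1) → Fin (n + 1) → Matrix (Fin m) (Fin m) ℂ)
    (hAb : ∀ i j a b, Ab i j a b = A (i, a) (j, b))
    (hAsym : Aᵀ = A)
    (htri : ∀ i j : Fin (n + 1), ((i : ℕ) + 1 < (j : ℕ) ∨ (j : ℕ) + 1 < (i : ℕ)) →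
      Ab i j = 0)
    (hlead : ∀ k : Fin (n + 1),
      IsUnit (A.submatrix
        (fun p : Fin ((k : ℕ) + 1) × Fin m => ((Fin.castLE k.isLt p.1 : Fin (n + 1)), p.2))
        (fun p : Fin ((k : ℕ) + 1) × Fin m => ((Fin.castLE k.isLt p.1 : Fin (n + 1)), p.2))))
    (g : Fin (n + 1) → Matrix (Fin m) (Fin m) ℂ)
    (hg0 : g 0 = (Ab 0 0)⁻¹)
    (hgrec : ∀ (i : Fin (n + 1)) (h : (i : ℕ) + 1 < n + 1),
      g ⟨(i : ℕ) + 1, h⟩ =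
        (Ab ⟨(i : ℕ) + 1, h⟩ ⟨(i : ℕ) + 1, h⟩
          - (Ab i ⟨(i : ℕ) + 1, h⟩)ᵀ * g i * Ab i ⟨(i : ℕ) + 1, h⟩)⁻¹) :
    g (Fin.last n) = fun a b => A⁻¹ (Fin.last n, a) (Fin.last n, b) := by
  obtain rfl : Ab = fun i j => blockEntry A i j := by
    funext i j
    ext a b
    exact hAb i j a b
  exact rgf_forward_eq_blockEntry_inv_leadingBlocks A hAsym (fun i j h => htri i j (Or.inl h)) hlead g hg0
    (fun i => hgrec i.castSucc i.succ.isLt) (Fin.last n)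

/-- for a block tridiagonal complex symmetric invertible matrix A
with N = n+1 diagonal blocks (each of size m), all of whose leading principal
block submatrices are invertible, the RGF forward recursion
g₁ = A₁₁⁻¹, gᵢ = (Aᵢᵢ − Aᵢ₋₁,ᵢᵀ gᵢ₋₁ Aᵢ₋₁,ᵢ)⁻¹ produces, in its last step,
the (N,N) diagonal block of A⁻¹. -/
theorem stmt19 {n m : ℕ}
    (A : Matrix (Fin (n + 1) × Fin m) (Fin (n + 1) × Fin m) ℂ)
    (Ab : Fin (n + 1) → Fin (n + 1) → Matrix (Fin m) (Fin m) ℂ)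
    (hAb : ∀ i j a b, Ab i j a b = A (i, a) (j, b))
    (hAu : IsUnit A) (hAsym : Aᵀ = A)
    (htri : ∀ i j : Fin (n + 1), ((i : ℕ) + 1 < (j : ℕ) ∨ (j : ℕ) + 1 < (i : ℕ)) →
      Ab i j = 0)
    (hlead : ∀ k : Fin (n + 1),
      IsUnit (A.submatrix
        (fun p : Fin ((k : ℕ) + 1) × Fin m => ((Fin.castLE k.isLt p.1 : Fin (n + 1)), p.2))
        (fun p : Fin ((k : ℕ) + 1) × Fin m => ((Fin.castLE k.isLt p.1 : Fin (n + 1)), p.2))))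
    (g : Fin (n + 1) → Matrix (Fin m) (Fin m) ℂ)
    (hg0 : g 0 = (Ab 0 0)⁻¹)
    (hgrec : ∀ (i : Fin (n + 1)) (h : (i : ℕ) + 1 < n + 1),
      g ⟨(i : ℕ) + 1, h⟩ =
        (Ab ⟨(i : ℕ) + 1, h⟩ ⟨(i : ℕ) + 1, h⟩
          - (Ab i ⟨(i : ℕ) + 1, h⟩)ᵀ * g i * Ab i ⟨(i : ℕ) + 1, h⟩)⁻¹) :
    g (Fin.last n) = fun a b => A⁻¹ (Fin.last n, a) (Fin.last n, b) :=
  stmt19_general A Ab hAb hAsym htri hlead g hg0 hgrec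
end
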